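/- arXiv:math/9910158 — 2 statements merged into one kernel-verified Lean document; each statement's English description precedes it below -/
import Mathlib

section
/- Multidimensional Hales–Jewett via alphabet powers: let Λ be a finite nonempty alphabet, m ≥ 1, and c a number of colors. Let k be any number of coordinates such that every c-coloring of functions from a k-element set into the alphabet Λ^m (= the set of functions {0,…,m−1} → Λ) admits a monochromatic combinatorial line. Then every c-coloring of functions from an (m·k)-element set into Λ admits a monochromatic m-dimensional combinatorial subspace: there exist pairwise disjoint nonempty sets M₀,…,M₋₁ ⊆ [m·k] and a function η* from the remaining coordinates to Λ such that all extensions of η* that are constant on each M_ℓ receive the same color. In particular HJ_Λ(m,c) ≤ m · HJ_{Λ^m}(1,c), so the multidimensional Hales–Jewett number HJ_Λ(m,c) is finite. -/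
/-- The point of an `m`-dimensional combinatorial subspace of `Fin k → Λ` determined by
blocks `B` (with `B i = some ℓ` meaning `i` lies in the `ℓ`-th moving block and
`B i = none` meaning `i` is a fixed coordinate with value `η i`), at block-values `v`. -/
def subspacePoint {Λ : Type*} {k m : ℕ} (B : Fin k → Option (Fin m)) (η : Fin k → Λ)
    (v : Fin m → Λ) : Fin k → Λ :=
  fun i => (B i).elim (η i) v

/-- A coloring `d` admits a fully monochromatic `m`-dimensional combinatorial subspace:
pairwise disjoint nonempty moving blocks (encoded by `B`) and a fixed part `η`
such that all points of the subspace get the same color. -/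
def HasMonoSubspace (Λ : Type*) {k : ℕ} (m : ℕ) {c : ℕ} (d : (Fin k → Λ) → Fin c) : Prop :=
  ∃ (B : Fin k → Option (Fin m)) (η : Fin k → Λ),
    (∀ ℓ : Fin m, ∃ i : Fin k, B i = some ℓ) ∧
    ∀ v w : Fin m → Λ, d (subspacePoint B η v) = d (subspacePoint B η w)

/-!
Read `Fin (m * k)` as `Fin m × Fin k`, so that a word of length `m * k` over `Λ` is a word of
length `k` over the alphabet `Λ^m`. A monochromatic line over `Λ^m`, with moving set `M`, then
yields a monochromatic `m`-dimensional subspace over `Λ` whose `ℓ`-th moving set is `{ℓ} × M`: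
the point with block values `v` is the line point with active letter `v`.
-/

section PowerAlphabet

variable {Λ : Type*} {m k c : ℕ}

def flattenWord (y : Fin k → Fin m → Λ) : Fin (m * k) → Λ :=
  fun i => y (finProdFinEquiv.symm i).2 (finProdFinEquiv.symm i).1

def spreadBlocks (B : Fin k → Option (Fin 1)) : Fin (m * k) → Option (Fin m) :=
  fun i => (B (finProdFinEquiv.symm i).2).map fun _ => (finProdFinEquiv.symm i).1

theorem subspacePoint_spreadBlocks (B : Fin k → Option (Fin 1)) (η : Fin k → Fin m → Λ)
    (v : Fin m → Λ) :
    subspacePoint (spreadBlocks B) (flattenWord η) v =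
      flattenWord (subspacePoint B η fun _ => v) := by
  funext i
  simp only [subspacePoint, spreadBlocks, flattenWord]
  cases B (finProdFinEquiv.symm i).2 <;> rfl

theorem exists_spreadBlocks_eq_some {B : Fin k → Option (Fin 1)} (hB : ∃ j, B j = some 0)
    (ℓ : Fin m) : ∃ i, spreadBlocks B i = some ℓ := by
  obtain ⟨j, hj⟩ := hB
  exact ⟨finProdFinEquiv (ℓ, j), by simp [spreadBlocks, hj]⟩

theorem HasMonoSubspace.of_line_comp_flattenWord (d : (Fin (m * k) → Λ) → Fin c)
    (h : HasMonoSubspace (Fin m → Λ) 1 (d ∘ flattenWord)) : HasMonoSubspace Λ m d := by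
  obtain ⟨B, η, hB, hmono⟩ := h
  refine ⟨spreadBlocks B, flattenWord η, exists_spreadBlocks_eq_some (hB 0), fun v w => ?_⟩
  simpa only [subspacePoint_spreadBlocks, Function.comp_apply] using
    hmono (fun _ => v) (fun _ => w)

end PowerAlphabet

theorem multidim_hales_jewett_via_power_general (Λ : Type*)
    (m c k : ℕ)
    (hline : ∀ d : (Fin k → (Fin m → Λ)) → Fin c, HasMonoSubspace (Fin m → Λ) 1 d) :
    ∀ d : (Fin (m * k) → Λ) → Fin c, HasMonoSubspace Λ m d :=
  fun d => HasMonoSubspace.of_line_comp_flattenWord d (hline _)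

/-- Multidimensional Hales–Jewett via alphabet powers: if every `c`-coloring of
`Fin k → (Fin m → Λ)` has a monochromatic combinatorial line, then every `c`-coloring of
`Fin (m * k) → Λ` has a monochromatic `m`-dimensional combinatorial subspace
(so `HJ_Λ(m,c) ≤ m · HJ_{Λ^m}(1,c)`). -/
theorem multidim_hales_jewett_via_power (Λ : Type*) [Fintype Λ] [Nonempty Λ]
    (m c k : ℕ) (hm : 1 ≤ m)
    (hline : ∀ d : (Fin k → (Fin m → Λ)) → Fin c, HasMonoSubspace (Fin m → Λ) 1 d) :
    ∀ d : (Fin (m * k) → Λ) → Fin c, HasMonoSubspace Λ m d :=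
  multidim_hales_jewett_via_power_general Λ m c k hline
end

section
/- Gallai-type configuration theorem: for every finite nonempty set S and every number of colors r there exists N such that for every r-coloring d of the set of functions v : S → {0,1,…,N−1} there exist v* : S → {0,…,N−1} and d* > 0 with v*(s) + d* ≤ N−1 for all s ∈ S, such that the set consisting of v* together with all the functions v*_α (for α ∈ S) — where v*_α agrees with v* except v*_α(α) = v*(α) + d* — is monochromatic. -/
/-!
Apply the Hales–Jewett theorem to the alphabet `Option S` and colour a word `x : ι → Option S`
by the colour of its letter counts `s ↦ #{i | x i = some s}`. Along a combinatorial line `l`,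
the counts of `l a` are those of the fixed coordinates of `l`, plus the number `d*` of active
coordinates at the letter `a`. So the point `l none` has counts `v*`, the point `l (some α)` has
counts `v* + d*·e_α`, and a monochromatic line gives the monochromatic configuration.
-/

open Finset

namespace Combinatorics.Line

variable {α ι : Type*} [Fintype ι] (l : Line α ι)

lemma card_filter_idxFun_eq_none_pos : 0 < #{i | l.idxFun i = none} :=
  card_pos.mpr <| l.proper.imp fun _ hi => by simpa using hi

variable [DecidableEq α]

lemma card_filter_idxFun_eq_some_add_card_filter_idxFun_eq_none_le (b : α) :
    #{i | l.idxFun i = some b} + #{i | l.idxFun i = none} ≤ Fintype.card ι := by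
  classical
  rw [← card_union_of_disjoint (disjoint_filter.2 fun _ _ h => by simp [h]), ← filter_or]
  exact card_le_univ _

lemma card_filter_apply_eq (a b : α) :
    #{i | l a i = b} =
      #{i | l.idxFun i = some b} + if b = a then #{i | l.idxFun i = none} else 0 := by
  classical
  split_ifs with hba
  · subst hba
    rw [← card_union_of_disjoint (disjoint_filter.2 fun _ _ h => by simp [h]), ← filter_or]
    refine congrArg card (filter_congr fun i _ => ?_)
    cases h : l.idxFun i <;> simp [h]
  · rw [add_zero]
    refine congrArg card (filter_congr fun i _ => ?_)
    cases h : l.idxFun i <;> simp [h, Ne.symm hba]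

end Combinatorics.Line

namespace Combinatorics

variable {S ι : Type*} [Fintype ι] [DecidableEq S]

def letterCounts (x : ι → Option S) (s : S) : Fin (Fintype.card ι + 1) :=
  ⟨#{i | x i = some s}, Nat.lt_succ_of_le (card_le_univ _)⟩

end Combinatorics

open Combinatorics

/-- Gallai-type configuration theorem: for every finite nonempty `S` and number of colors
`r` there is `N` such that every `r`-coloring of functions `S → Fin N` admits `v*` and
`d* > 0`, with `v* s + d* ≤ N - 1` for all `s`, such that `v*` together with all the
functions `v*_α = v* + d*·e_α` (for `α ∈ S`) is monochromatic. -/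
theorem gallai_configuration (S : Type) [Fintype S] [DecidableEq S] (r : ℕ) :
    ∃ N : ℕ, ∀ d : (S → Fin N) → Fin r,
      ∃ (v : S → ℕ) (dstar : ℕ) (hd : 0 < dstar) (hb : ∀ s : S, v s + dstar ≤ N - 1),
        ∀ α : S,
          d (fun s => ⟨v s + (if s = α then dstar else 0),
              by have h1 := hb s; split <;> omega⟩) =
          d (fun s => ⟨v s, by have h1 := hb s; omega⟩) := by
  obtain ⟨ι, _, hι⟩ := Line.exists_mono_in_high_dimension (Option S) (Fin r)
  refine ⟨Fintype.card ι + 1, fun d => ?_⟩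
  obtain ⟨l, c, hl⟩ := hι fun x => d (letterCounts x)
  refine ⟨fun s => #{i | l.idxFun i = some (some s)}, #{i | l.idxFun i = none},
    l.card_filter_idxFun_eq_none_pos,
    fun s => l.card_filter_idxFun_eq_some_add_card_filter_idxFun_eq_none_le (some s), fun α => ?_⟩
  convert (hl (some α)).trans (hl none).symm using 2 <;>
    funext s <;> ext <;> simp only [letterCounts, l.card_filter_apply_eq] <;> simp
end
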